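/- arXiv:1706.07396 — 2 statements merged into one kernel-verified Lean document; each statement's English description precedes it below -/
import Mathlib

section
/- For every continuous φ : ℝ → (0, ∞) there exists a smooth (C^∞) function ψ : ℝ → (0, ∞) such that lim_{t→±∞} φ(t)/ψ(t) = 1, and consequently C̃_φ = C̃_ψ. -/
open Filter Set Polynomial

/-- growth bound for polynomials -/
lemma aux_poly_growth (p : ℝ[X]) :
    ∃ C : ℝ, 0 ≤ C ∧ ∀ t : ℝ, 1 ≤ |t| → |p.eval t| ≤ C * |t| ^ p.natDegree := by
  refine ⟨∑ i ∈ Finset.range (p.natDegree + 1), |p.coeff i|,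
    Finset.sum_nonneg fun i _ => abs_nonneg _, fun t ht => ?_⟩
  rw [Polynomial.eval_eq_sum_range, Finset.sum_mul]
  refine (Finset.abs_sum_le_sum_abs _ _).trans (Finset.sum_le_sum fun i hi => ?_)
  rw [abs_mul, abs_pow]
  exact mul_le_mul_of_nonneg_left
    (pow_le_pow_right₀ ht (by simpa using Nat.lt_succ_iff.mp (Finset.mem_range.mp hi)))
    (abs_nonneg _)

lemma aux_outer (p : ℝ[X]) (a c ε : ℝ) (ha : 0 < a) (hac : a < c) (hc1 : 1 ≤ c) (hε : 0 < ε) :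
    ∃ m₀ : ℕ, 1 ≤ m₀ ∧ ∀ m, m₀ ≤ m → ∀ t : ℝ, c ≤ |t| →
      |p.eval t| * Real.exp (-(((t / a) ^ 2) ^ m)) ≤ ε := by
  obtain ⟨C, hC0, hC⟩ := aux_poly_growth p
  set d := p.natDegree with hd
  set ρ := c / a with hρdef
  have hρ : 1 < ρ := (one_lt_div ha).mpr hac
  set K := (C * a ^ d * (d + 1 : ℝ) ^ (d + 1)) / ε + 1 with hK
  obtain ⟨m₀', hm₀'⟩ := ((tendsto_pow_atTop_atTop_of_one_lt hρ).eventually_ge_atTop K).exists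
  refine ⟨max m₀' 1, le_max_right _ _, fun m hm t ht => ?_⟩
  have hm1 : 1 ≤ m := le_trans (le_max_right _ _) hm
  have hKm : K ≤ ρ ^ m := by
    calc K ≤ ρ ^ m₀' := hm₀'
    _ ≤ ρ ^ m := pow_le_pow_right₀ hρ.le (le_trans (le_max_left _ _) hm)
  set x := |t| with hx
  have hx1 : 1 ≤ x := le_trans hc1 ht
  have hx0 : 0 < x := by linarith
  set r := x / a with hr
  have hrρ : ρ ≤ r := by rw [hρdef, hr]; gcongr
  have hr1 : 1 < r := lt_of_lt_of_le hρ hrρ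
  -- rewrite the exponent using |t|
  have hsq : (t / a) ^ 2 = (x / a) ^ 2 := by
    rw [div_pow, div_pow, hx, sq_abs]
  rw [hsq]
  set y : ℝ := ((x / a) ^ 2) ^ m with hy
  have hy0 : 0 ≤ y := by positivity
  -- exp lower bound : exp y ≥ (y/(d+1))^(d+1)
  have hexp : (y / (d + 1)) ^ (d + 1) ≤ Real.exp y := by
    have h1 : Real.exp y = Real.exp (y / (d + 1)) ^ (d + 1) := by
      rw [← Real.exp_nat_mul]
      congr 1
      field_simp
      norm_cast
    rw [h1]
    have h2 : y / (d+1) ≤ Real.exp (y / (d+1)) := by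
      have := Real.add_one_le_exp (y / (d+1))
      linarith
    exact pow_le_pow_left₀ (by positivity) h2 _
  -- key power computation
  have hyp : (y / (d + 1)) ^ (d + 1) = r ^ (2 * m * (d+1)) / ((d+1:ℝ)) ^ (d+1) := by
    rw [div_pow]
    congr 1
    rw [hy, hr, ← pow_mul, ← pow_mul]
    ring_nf
  have hde : d + (2 * m * (d+1) - d) = 2 * m * (d + 1) := by
    have : d ≤ 2 * m * (d+1) := by nlinarith
    omega
  have he_ge : m ≤ 2 * m * (d+1) - d := by
    have h3 : m + d ≤ 2 * m * (d+1) := by nlinarith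
    omega
  have hrpow : r ^ d * ρ ^ m ≤ r ^ (2 * m * (d + 1)) := by
    rw [← hde, pow_add]
    gcongr
    calc ρ ^ m ≤ r ^ m := pow_le_pow_left₀ (by linarith) hrρ m
    _ ≤ r ^ (2 * m * (d+1) - d) := pow_le_pow_right₀ hr1.le he_ge
  -- the main chain
  have hmain : |p.eval t| ≤ ε * Real.exp y := by
    have hpt : |p.eval t| ≤ C * x ^ d := hC t hx1
    have hxar : x = a * r := by rw [hr]; field_simp
    have hchain : C * x ^ d ≤ ε * (r ^ (2*m*(d+1)) / ((d+1:ℝ))^(d+1)) := by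
      have hd1pos : (0:ℝ) < ((d+1:ℝ))^(d+1) := by positivity
      have hCK : C * a ^ d * ((d+1:ℝ))^(d+1) ≤ ε * ρ ^ m := by
        have h := hKm
        rw [hK] at h
        have h2 : C * a ^ d * ((d+1:ℝ))^(d+1) / ε ≤ ρ ^ m - 1 := by linarith
        calc C * a ^ d * ((d+1:ℝ))^(d+1) = (C * a ^ d * ((d+1:ℝ))^(d+1) / ε) * ε := by
              field_simp
        _ ≤ (ρ ^ m - 1) * ε := mul_le_mul_of_nonneg_right h2 hε.le
        _ ≤ ε * ρ ^ m := by nlinarith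
      rw [hxar, mul_pow, ← mul_assoc, mul_div_assoc' ε, le_div_iff₀ hd1pos]
      have hrd : (0:ℝ) < r ^ d := by positivity
      calc C * a ^ d * r ^ d * ((d+1:ℝ))^(d+1)
          = (C * a ^ d * ((d+1:ℝ))^(d+1)) * r ^ d := by ring
      _ ≤ (ε * ρ ^ m) * r ^ d := mul_le_mul_of_nonneg_right hCK hrd.le
      _ = ε * (r ^ d * ρ ^ m) := by ring
      _ ≤ ε * r ^ (2*m*(d+1)) := mul_le_mul_of_nonneg_left hrpow hε.le
    calc |p.eval t| ≤ C * x ^ d := hpt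
    _ ≤ ε * (r ^ (2*m*(d+1)) / ((d+1:ℝ))^(d+1)) := hchain
    _ = ε * ((y / (d+1)) ^ (d+1)) := by rw [hyp]
    _ ≤ ε * Real.exp y := mul_le_mul_of_nonneg_left hexp hε.le
  rw [Real.exp_neg]
  have hey : 0 < Real.exp y := Real.exp_pos y
  rw [mul_inv_le_iff₀ hey]
  linarith [hmain]

lemma aux_step (u : ℝ → ℝ) (hu : Continuous u) (k : ℕ) (hk : 1 ≤ k)
    (v : ℂ → ℂ) (hv : Differentiable ℂ v) (hvr : ∀ t : ℝ, (v t).im = 0) :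
    ∃ g : ℂ → ℂ, Differentiable ℂ g ∧ (∀ t : ℝ, (g t).im = 0) ∧
      (∀ t : ℝ, |t| ≤ (k : ℝ) + 1 → ‖g (t : ℂ)‖ ≤ |u t - (v t).re| + 2 * (1/2 : ℝ) ^ k) ∧
      (∀ z : ℂ, ‖z‖ ≤ (k : ℝ) - 1 → ‖g z‖ ≤ (1/2 : ℝ) ^ k) ∧
      (∀ t : ℝ, (k : ℝ) ≤ |t| → |t| ≤ (k : ℝ) + 2 →
        |u t - (v t).re - (g (t : ℂ)).re| ≤ 2 * (1/2 : ℝ) ^ k) := by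
  have hk1 : (1:ℝ) ≤ (k:ℝ) := by exact_mod_cast hk
  set r : ℝ → ℝ := fun t => u t - (v t).re with hrdef
  have hr : Continuous r :=
    hu.sub (Complex.continuous_re.comp (hv.continuous.comp Complex.continuous_ofReal))
  obtain ⟨p, hp⟩ := exists_polynomial_near_of_continuousOn (-((k:ℝ)+2)) ((k:ℝ)+2) r
    hr.continuousOn ((1/2:ℝ)^k) (by positivity)
  have habs : ∀ t : ℝ, |t| ≤ (k:ℝ) + 2 → |p.eval t - r t| ≤ (1/2:ℝ)^k := by
    intro t ht
    have := abs_le.mp ht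
    exact (hp t (Set.mem_Icc.mpr ⟨by linarith [this.1], this.2⟩)).le
  set a : ℝ := (k:ℝ) - 1/2 with hadef
  have ha : 0 < a := by rw [hadef]; linarith
  have hac : a < (k:ℝ) := by rw [hadef]; linarith
  obtain ⟨m₁, hm₁1, hm₁⟩ := aux_outer p a (k:ℝ) ((1/2:ℝ)^k) ha hac hk1 (by positivity)
  -- complex polynomial
  set pc : ℂ → ℂ := fun z => (Polynomial.aeval z) p with hpcdef
  have hpc_diff : Differentiable ℂ pc := by
    have : pc = fun z => (p.map (algebraMap ℝ ℂ)).eval z := by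
      funext z; rw [hpcdef]; simp [Polynomial.aeval_def, Polynomial.eval_map]
    rw [this]
    exact (p.map (algebraMap ℝ ℂ)).differentiable
  have hpc_real : ∀ t : ℝ, pc (t:ℂ) = ((p.eval t : ℝ) : ℂ) := by
    intro t
    rw [hpcdef]
    have h1 : ((t:ℝ) : ℂ) = algebraMap ℝ ℂ t := rfl
    simp only [h1, Polynomial.aeval_algebraMap_apply]
    norm_cast
  -- bound on the disk
  set b : ℝ := (k:ℝ) - 1 with hbdef
  have hb0 : 0 ≤ b := by rw [hbdef]; linarith
  obtain ⟨M, hM⟩ := (isCompact_closedBall (0:ℂ) b).exists_bound_of_continuousOn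
    hpc_diff.continuous.continuousOn
  have hM0 : 0 ≤ M := le_trans (norm_nonneg (pc 0)) (hM 0 (by simp [hb0]))
  set q : ℝ := (b/a)^2 with hqdef
  have hq0 : 0 ≤ q := sq_nonneg _
  have hba : b/a < 1 := (div_lt_one ha).mpr (by rw [hbdef, hadef]; linarith)
  have hq1 : q < 1 := by
    rw [hqdef]
    calc (b/a)^2 ≤ (b/a)*1 := by nlinarith [div_nonneg hb0 ha.le]
    _ < 1 := by nlinarith [div_nonneg hb0 ha.le]
  obtain ⟨m₂, hm₂⟩ := ((tendsto_pow_atTop_nhds_zero_of_lt_one hq0 hq1).eventually_le_const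
    (show (0:ℝ) < (1/2:ℝ)^k / (2*M+1) by positivity)).exists
  set m : ℕ := max m₁ m₂ with hmdef
  set g : ℂ → ℂ := fun z => pc z * (1 - Complex.exp (-(((z/(a:ℂ))^2)^m))) with hgdef
  have hgdiff : Differentiable ℂ g := by
    apply hpc_diff.mul
    apply (differentiable_const (1:ℂ)).sub
    apply Complex.differentiable_exp.comp
    exact (((differentiable_id).div_const (a:ℂ)).pow 2).pow m |>.neg
  have gKey : ∀ t : ℝ, g (t:ℂ) = ((p.eval t * (1 - Real.exp (-(((t/a)^2)^m))) : ℝ) : ℂ) := by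
    intro t
    rw [hgdef]
    simp only []
    rw [hpc_real]
    have h2 : ((t:ℂ)/(a:ℂ)) = ((t/a : ℝ) : ℂ) := by push_cast; ring
    rw [h2, ← Complex.ofReal_pow, ← Complex.ofReal_pow, ← Complex.ofReal_neg,
      ← Complex.ofReal_exp]
    push_cast
    ring
  have hX0 : ∀ t : ℝ, 0 ≤ ((t/a)^2)^m := fun t => by positivity
  have hfac : ∀ t : ℝ, 0 ≤ 1 - Real.exp (-(((t/a)^2)^m)) ∧
      1 - Real.exp (-(((t/a)^2)^m)) ≤ 1 := by
    intro t
    constructor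
    · have : Real.exp (-(((t/a)^2)^m)) ≤ Real.exp 0 :=
        Real.exp_le_exp.mpr (by linarith [hX0 t])
      simpa [Real.exp_zero] using this
    · linarith [Real.exp_pos (-(((t/a)^2)^m))]
  refine ⟨g, hgdiff, fun t => by rw [gKey]; exact Complex.ofReal_im _, ?_, ?_, ?_⟩
  · -- bound by |r| + 2δ on [-(k+1), k+1]
    intro t ht
    rw [gKey, Complex.norm_real, Real.norm_eq_abs, abs_mul]
    have h3 := hfac t
    have h4 : |1 - Real.exp (-(((t/a)^2)^m))| ≤ 1 := by rw [abs_of_nonneg h3.1]; exact h3.2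
    have h5 : |p.eval t| ≤ |r t| + (1/2:ℝ)^k := by
      have := habs t (by linarith)
      calc |p.eval t| = |(p.eval t - r t) + r t| := by ring_nf
      _ ≤ |p.eval t - r t| + |r t| := abs_add_le _ _
      _ ≤ |r t| + (1/2:ℝ)^k := by linarith
    calc |p.eval t| * |1 - Real.exp (-(((t/a)^2)^m))| ≤ |p.eval t| * 1 :=
          mul_le_mul_of_nonneg_left h4 (abs_nonneg _)
    _ ≤ |r t| + 2 * (1/2:ℝ)^k := by rw [mul_one]; nlinarith [h5, pow_pos (by norm_num : (0:ℝ) < 1/2) k]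
  · -- disk bound
    intro z hz
    rw [hgdef]
    simp only []
    rw [norm_mul]
    have hMz : ‖pc z‖ ≤ M := hM z (by simpa [Metric.mem_closedBall, dist_eq_norm] using hz)
    set w : ℂ := -(((z/(a:ℂ))^2)^m) with hwdef
    have hwnorm : ‖w‖ ≤ q ^ m := by
      rw [hwdef, norm_neg, norm_pow, norm_pow, hqdef, ← pow_mul, ← pow_mul]
      apply pow_le_pow_left₀ (norm_nonneg _)
      rw [norm_div, Complex.norm_real, Real.norm_eq_abs, abs_of_pos ha]
      exact div_le_div_of_nonneg_right hz ha.le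
    have hq1m : q ^ m ≤ 1 := pow_le_one₀ hq0 hq1.le
    have hqm2 : q ^ m ≤ (1/2:ℝ)^k / (2*M+1) := le_trans
      (pow_le_pow_of_le_one hq0 hq1.le (le_max_right m₁ m₂)) hm₂
    have h6 : ‖1 - Complex.exp w‖ ≤ 2 * ‖w‖ := by
      rw [norm_sub_rev]
      have := Complex.norm_exp_sub_one_le (x := w) (by
        linarith)
      simpa using this
    calc ‖pc z‖ * ‖1 - Complex.exp w‖ ≤ M * (2 * ‖w‖) := by
          apply mul_le_mul hMz h6 (norm_nonneg _) hM0
    _ ≤ M * (2 * ((1/2:ℝ)^k / (2*M+1))) :=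
          mul_le_mul_of_nonneg_left
            (mul_le_mul_of_nonneg_left (le_trans hwnorm hqm2) (by norm_num)) hM0
    _ ≤ (1/2:ℝ)^k := by
          have h7 : (0:ℝ) < 2*M+1 := by linarith
          have hc0 : (0:ℝ) ≤ (1/2:ℝ)^k := by positivity
          have heq : M * (2 * ((1/2:ℝ)^k / (2*M+1))) = (2*M*(1/2:ℝ)^k)/(2*M+1) := by
            ring
          rw [heq, div_le_iff₀ h7]
          nlinarith
  · -- annulus estimate
    intro t h1 h2
    rw [gKey, Complex.ofReal_re]
    have h9 := habs t h2
    have h10 : |p.eval t| * Real.exp (-(((t/a)^2)^m)) ≤ (1/2:ℝ)^k :=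
      hm₁ m (le_max_left _ _) t h1
    have : u t - (v t).re - p.eval t * (1 - Real.exp (-(((t/a)^2)^m)))
        = (r t - p.eval t) + p.eval t * Real.exp (-(((t/a)^2)^m)) := by
      rw [hrdef]; ring
    rw [this]
    calc |(r t - p.eval t) + p.eval t * Real.exp (-(((t/a)^2)^m))|
        ≤ |r t - p.eval t| + |p.eval t * Real.exp (-(((t/a)^2)^m))| := abs_add_le _ _
    _ ≤ (1/2:ℝ)^k + (1/2:ℝ)^k := by
        apply add_le_add
        · rw [abs_sub_comm]; exact h9
        · rw [abs_mul, abs_of_pos (Real.exp_pos _)]; exact h10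
    _ = 2 * (1/2:ℝ)^k := by ring

open Filter

/-- For every continuous positive weight `φ` there is a smooth positive weight `ψ` with
`φ/ψ → 1` at `±∞`; consequently the weighted spaces coincide: `C̃_φ = C̃_ψ`. -/
theorem stmt_11 (φ : ℝ → ℝ) (hφc : Continuous φ) (hφ : ∀ t, 0 < φ t) :
    ∃ ψ : ℝ → ℝ, ContDiff ℝ (⊤ : ℕ∞) ψ ∧ (∀ t, 0 < ψ t) ∧
      Tendsto (fun t => φ t / ψ t) atTop (nhds 1) ∧
      Tendsto (fun t => φ t / ψ t) atBot (nhds 1) ∧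
      ({f : ℝ → ℝ | ∃ ft : C(EReal, ℝ), ∀ t : ℝ, f t = φ t * ft (t : EReal)} =
        {f : ℝ → ℝ | ∃ ft : C(EReal, ℝ), ∀ t : ℝ, f t = ψ t * ft (t : EReal)}) := by
  classical
  set u : ℝ → ℝ := fun t => Real.log (φ t) with hudef
  have hu : Continuous u := Continuous.log hφc fun t => (hφ t).ne'
  -- unconditional choice function for the construction step
  have H : ∀ (k : ℕ) (v : ℂ → ℂ), ∃ g : ℂ → ℂ,
      (1 ≤ k ∧ Differentiable ℂ v ∧ (∀ t : ℝ, (v t).im = 0)) →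
      (Differentiable ℂ g ∧ (∀ t : ℝ, (g t).im = 0) ∧
      (∀ t : ℝ, |t| ≤ (k : ℝ) + 1 → ‖g (t : ℂ)‖ ≤ |u t - (v t).re| + 2 * (1/2 : ℝ) ^ k) ∧
      (∀ z : ℂ, ‖z‖ ≤ (k : ℝ) - 1 → ‖g z‖ ≤ (1/2 : ℝ) ^ k) ∧
      (∀ t : ℝ, (k : ℝ) ≤ |t| → |t| ≤ (k : ℝ) + 2 →
        |u t - (v t).re - (g (t : ℂ)).re| ≤ 2 * (1/2 : ℝ) ^ k)) := by
    intro k v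
    by_cases h : 1 ≤ k ∧ Differentiable ℂ v ∧ (∀ t : ℝ, (v t).im = 0)
    · obtain ⟨g, hg⟩ := aux_step u hu k h.1 v h.2.1 h.2.2
      exact ⟨g, fun _ => hg⟩
    · exact ⟨0, fun h' => absurd h' h⟩
  choose G hG using H
  -- the recursive sequence of approximants
  obtain ⟨vs, vs_zero, vs_succ⟩ : ∃ vs : ℕ → ℂ → ℂ, vs 0 = (fun _ => 0) ∧
      ∀ n, vs (n+1) = vs n + G (n+1) (vs n) :=
    ⟨fun n => Nat.rec (fun _ => 0) (fun n prev => prev + G (n+1) prev) n, rfl, fun n => rfl⟩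
  have inv : ∀ n, Differentiable ℂ (vs n) ∧ ∀ t : ℝ, ((vs n) (t:ℂ)).im = 0 := by
    intro n
    induction n with
    | zero =>
      rw [vs_zero]
      exact ⟨differentiable_const 0, fun t => rfl⟩
    | succ n ih =>
      have hspec := hG (n+1) (vs n) ⟨Nat.succ_le_succ (Nat.zero_le n), ih.1, ih.2⟩
      rw [vs_succ]
      exact ⟨ih.1.add hspec.1, fun t => by
        simp [Pi.add_apply, Complex.add_im, ih.2 t, hspec.2.1 t]⟩
  set gf : ℕ → ℂ → ℂ := fun n => G (n+1) (vs n) with hgfdef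
  have specs : ∀ n, (Differentiable ℂ (gf n) ∧ (∀ t : ℝ, ((gf n) (t:ℂ)).im = 0) ∧
      (∀ t : ℝ, |t| ≤ (n+1 : ℝ) + 1 →
        ‖(gf n) (t : ℂ)‖ ≤ |u t - ((vs n) (t:ℂ)).re| + 2 * (1/2 : ℝ) ^ (n+1)) ∧
      (∀ z : ℂ, ‖z‖ ≤ (n+1 : ℝ) - 1 → ‖(gf n) z‖ ≤ (1/2 : ℝ) ^ (n+1)) ∧
      (∀ t : ℝ, (n+1 : ℝ) ≤ |t| → |t| ≤ (n+1 : ℝ) + 2 →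
        |u t - ((vs n) (t:ℂ)).re - ((gf n) (t : ℂ)).re| ≤ 2 * (1/2 : ℝ) ^ (n+1))) := by
    intro n
    have := hG (n+1) (vs n) ⟨Nat.succ_le_succ (Nat.zero_le n), (inv n).1, (inv n).2⟩
    push_cast
    push_cast at this
    exact this
  have vs_eq : ∀ n z, vs n z = ∑ i ∈ Finset.range n, gf i z := by
    intro n
    induction n with
    | zero => intro z; rw [vs_zero]; simp
    | succ n ih =>
      intro z
      rw [vs_succ, Pi.add_apply, ih z, Finset.sum_range_succ]
  -- pointwise summability (with norms)
  have hnormsum : ∀ z : ℂ, Summable (fun n => ‖gf n z‖) := by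
    intro z
    apply Summable.of_norm_bounded_eventually (g := fun n => (1/2:ℝ)^(n+1))
    · exact ((summable_geometric_of_lt_one (r := (1/2:ℝ)) (by norm_num) (by norm_num)).mul_right (1/2:ℝ)).congr
        (fun n => by rw [pow_succ])
    · rw [Nat.cofinite_eq_atTop]
      filter_upwards [eventually_ge_atTop ⌈‖z‖⌉₊] with n hn
      rw [Real.norm_eq_abs, abs_of_nonneg (norm_nonneg _)]
      apply (specs n).2.2.2.1 z
      have := Nat.le_ceil ‖z‖
      have h2 : (⌈‖z‖⌉₊ : ℝ) ≤ (n:ℝ) := by exact_mod_cast hn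
      push_cast
      linarith
  have hsum : ∀ z : ℂ, Summable (fun n => gf n z) := fun z =>
    (hnormsum z).of_norm
  obtain ⟨V, hVdef⟩ : ∃ V : ℂ → ℂ, ∀ z, V z = ∑' n, gf n z := ⟨_, fun z => rfl⟩
  have hVdiff : Differentiable ℂ V := by
    intro z₀
    set R : ℕ := ⌈‖z₀‖⌉₊ with hRdef
    -- bounds on the closed ball of radius R+1
    have hCb : ∀ n, ∃ Cn : ℝ, ∀ z ∈ Metric.closedBall (0:ℂ) ((R:ℝ)+1), ‖gf n z‖ ≤ Cn :=
      fun n => (isCompact_closedBall _ _).exists_bound_of_continuousOn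
        ((specs n).1.continuous.continuousOn)
    choose Cb hCb' using hCb
    set ub : ℕ → ℝ := fun n => if n < R + 1 then Cb n else (1/2:ℝ)^(n+1) with hubdef
    have hub_sum : Summable ub := by
      rw [← summable_nat_add_iff (R+1)]
      have : (fun n => ub (n + (R+1))) = fun n => (1/2:ℝ)^(n + (R+1) + 1) := by
        funext n
        rw [hubdef]
        simp only []
        rw [if_neg (by omega)]
      rw [this]
      exact ((summable_geometric_of_lt_one (r := (1/2:ℝ)) (by norm_num) (by norm_num)).mul_right
        ((1/2:ℝ)^(R+2))).congr (fun n => by rw [← pow_add]; ring_nf)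
    have hbd : ∀ n z, z ∈ Metric.ball (0:ℂ) ((R:ℝ)+1) → ‖gf n z‖ ≤ ub n := by
      intro n z hz
      rw [hubdef]
      simp only []
      by_cases h : n < R + 1
      · rw [if_pos h]
        exact hCb' n z (Metric.ball_subset_closedBall hz)
      · rw [if_neg h]
        apply (specs n).2.2.2.1 z
        have h1 : ‖z‖ < (R:ℝ)+1 := by simpa [Metric.mem_ball, dist_eq_norm] using hz
        have h2 : (R:ℝ)+1 ≤ (n:ℝ) := by
          push_cast
          have : R + 1 ≤ n := not_lt.mp h
          exact_mod_cast this
        push_cast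
        linarith
    have hdOn : DifferentiableOn ℂ (fun z => ∑' n, gf n z) (Metric.ball (0:ℂ) ((R:ℝ)+1)) := by
      apply Complex.differentiableOn_tsum_of_summable_norm hub_sum
        (fun n => ((specs n).1.differentiableOn)) Metric.isOpen_ball hbd
    have hdOn' : DifferentiableOn ℂ V (Metric.ball (0:ℂ) ((R:ℝ)+1)) :=
      (hdOn.congr (fun z _ => hVdef z))
    apply hdOn'.differentiableAt (Metric.isOpen_ball.mem_nhds _)
    simp only [Metric.mem_ball, dist_eq_norm, sub_zero]
    exact lt_of_le_of_lt (Nat.le_ceil _) (by push_cast; linarith)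
  obtain ⟨w, hwdef⟩ : ∃ w : ℝ → ℝ, ∀ t, w t = (V (t:ℂ)).re := ⟨_, fun t => rfl⟩
  obtain ⟨ψ, hψdef⟩ : ∃ ψ : ℝ → ℝ, ∀ t, ψ t = Real.exp (w t) := ⟨_, fun t => rfl⟩
  -- key asymptotic estimate
  have hkey : ∀ N : ℕ, ∀ t : ℝ, ((N:ℝ)+1) ≤ |t| → |t| ≤ (N:ℝ)+2 →
      |u t - w t| ≤ 16 * (1/2:ℝ)^(N+1) := by
    intro N t h1 h2
    have hsummt := hsum (t:ℂ)
    have hsplit := Summable.sum_add_tsum_nat_add (f := fun n => gf n (t:ℂ)) (N+1) hsummt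
    set T : ℂ := ∑' i, gf (i+(N+1)) (t:ℂ) with hTdef
    have hVt : V (t:ℂ) = vs (N+1) (t:ℂ) + T := by
      rw [hVdef, vs_eq]
      exact hsplit.symm
    have hvssucc : vs (N+1) (t:ℂ) = vs N (t:ℂ) + gf N (t:ℂ) := by
      rw [vs_succ]
      rfl
    have hA : |u t - (vs (N+1) (t:ℂ)).re| ≤ 2 * (1/2:ℝ)^(N+1) := by
      have h5 := (specs N).2.2.2.2 t (by push_cast; linarith) (by push_cast; linarith)
      rw [hvssucc, Complex.add_re]
      have : u t - ((vs N (t:ℂ)).re + (gf N (t:ℂ)).re)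
          = u t - (vs N (t:ℂ)).re - (gf N (t:ℂ)).re := by ring
      rw [this]
      exact h5
    -- tail bounds
    have hnt : Summable (fun i => ‖gf (i+(N+1)) (t:ℂ)‖) :=
      (summable_nat_add_iff (f := fun n => ‖gf n (t:ℂ)‖) (N+1)).mpr (hnormsum (t:ℂ))
    set bb : ℕ → ℝ := fun i => (1/2:ℝ)^(i+(N+2)) + (if i = 0 then 6*(1/2:ℝ)^(N+1) else 0)
      with hbbdef
    have hbbsum : Summable bb := by
      apply Summable.add
      · exact ((summable_geometric_of_lt_one (r := (1/2:ℝ)) (by norm_num)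
          (by norm_num)).mul_right ((1/2:ℝ)^(N+2))).congr (fun n => by rw [← pow_add])
      · exact summable_of_ne_finset_zero (s := {0}) (fun i hi => by
          simp only [Finset.mem_singleton] at hi
          simp [if_neg hi])
    have hbound : ∀ i, ‖gf (i+(N+1)) (t:ℂ)‖ ≤ bb i := by
      intro i
      rcases Nat.eq_zero_or_pos i with h0 | hpos
      · subst h0
        have hbb0 : bb 0 = (1/2:ℝ)^(0+(N+2)) + 6*(1/2:ℝ)^(N+1) := by
          rw [hbbdef]
          simp
        rw [hbb0, show (0:ℕ)+(N+1) = N+1 from by omega]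
        have h6 := (specs (N+1)).2.2.1 t (by push_cast; linarith)
        have h7 : (0:ℝ) < (1/2:ℝ)^(N+2) := by positivity
        have h8 : ((1:ℝ)/2)^(N+1+1) = (1/2:ℝ)^(N+2) := by norm_num
        calc ‖gf (N+1) (t:ℂ)‖ ≤ |u t - (vs (N+1) (t:ℂ)).re| + 2*(1/2:ℝ)^(N+1+1) := h6
        _ ≤ 2 * (1/2:ℝ)^(N+1) + 2*(1/2:ℝ)^(N+1+1) := by linarith [hA]
        _ ≤ (1/2:ℝ)^(0+(N+2)) + 6*(1/2:ℝ)^(N+1) := by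
            have e1 : ((1:ℝ)/2)^(N+1+1) = (1/2:ℝ)^(N+1)*(1/2) := pow_succ _ _
            have e2 : ((1:ℝ)/2)^(0+(N+2)) = (1/2:ℝ)^(N+1)*(1/2) := by
              rw [zero_add, show N+2 = N+1+1 from rfl]
              exact pow_succ _ _
            have h9 : (0:ℝ) < (1/2:ℝ)^(N+1) := by positivity
            linarith [e1, e2, h9]
      · have h6 := (specs (i+(N+1))).2.2.2.1 (t:ℂ) (by
          rw [Complex.norm_real, Real.norm_eq_abs]
          push_cast
          have : (1:ℝ) ≤ (i:ℝ) := by exact_mod_cast hpos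
          linarith)
        rw [hbbdef]
        simp only [if_neg (Nat.pos_iff_ne_zero.mp hpos)]
        have h7 : (0:ℝ) < (1/2:ℝ)^(i+(N+2)) := by positivity
        calc ‖gf (i+(N+1)) (t:ℂ)‖ ≤ (1/2:ℝ)^((i+(N+1))+1) := h6
        _ ≤ (1/2:ℝ)^(i+(N+2)) + 0 := by
            rw [add_zero, show (i+(N+1))+1 = i+(N+2) from by omega]
    have hbbtsum : ∑' i, bb i = (1/2:ℝ)^(N+1) + 6*(1/2:ℝ)^(N+1) := by
      rw [hbbdef, Summable.tsum_add
        (((summable_geometric_of_lt_one (r := (1/2:ℝ)) (by norm_num)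
          (by norm_num)).mul_right ((1/2:ℝ)^(N+2))).congr (fun n => by rw [← pow_add]))
        (summable_of_ne_finset_zero (s := {0}) (fun i hi => by
          simp only [Finset.mem_singleton] at hi
          simp [if_neg hi]))]
      congr 1
      · have : (fun i : ℕ => (1/2:ℝ)^(i+(N+2))) = fun i : ℕ => (1/2:ℝ)^i * (1/2:ℝ)^(N+2) := by
          funext i; rw [← pow_add]
        rw [this, tsum_mul_right, tsum_geometric_of_lt_one (by norm_num) (by norm_num)]
        have h12 : ((1:ℝ) - 1/2)⁻¹ = 2 := by norm_num
        rw [h12, show N+2 = N+1+1 from rfl, pow_succ]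
        ring
      · exact tsum_ite_eq 0 (fun _ => 6*(1/2:ℝ)^(N+1))
    have hTnorm : ‖T‖ ≤ 7 * (1/2:ℝ)^(N+1) := by
      calc ‖T‖ ≤ ∑' i, ‖gf (i+(N+1)) (t:ℂ)‖ := norm_tsum_le_tsum_norm hnt
      _ ≤ ∑' i, bb i := Summable.tsum_le_tsum hbound hnt hbbsum
      _ = (1/2:ℝ)^(N+1) + 6*(1/2:ℝ)^(N+1) := hbbtsum
      _ = 7 * (1/2:ℝ)^(N+1) := by ring
    have hTre : |T.re| ≤ 7 * (1/2:ℝ)^(N+1) := by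
      calc |T.re| ≤ ‖T‖ := Complex.abs_re_le_norm T
      _ = ‖T‖ := rfl
      _ ≤ 7 * (1/2:ℝ)^(N+1) := hTnorm
    have hwt : w t = (vs (N+1) (t:ℂ)).re + T.re := by
      rw [hwdef, hVt, Complex.add_re]
    rw [hwt]
    calc |u t - ((vs (N+1) (t:ℂ)).re + T.re)|
        = |(u t - (vs (N+1) (t:ℂ)).re) + (-T.re)| := by ring_nf
    _ ≤ |u t - (vs (N+1) (t:ℂ)).re| + |(-T.re)| := abs_add_le _ _
    _ ≤ 2 * (1/2:ℝ)^(N+1) + 7 * (1/2:ℝ)^(N+1) := by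
        rw [abs_neg]
        exact add_le_add hA hTre
    _ ≤ 16 * (1/2:ℝ)^(N+1) := by
        have : (0:ℝ) < (1/2:ℝ)^(N+1) := by positivity
        nlinarith
  -- tendsto of the difference
  have hdelta : ∀ ε : ℝ, 0 < ε → ∃ N₀ : ℕ, ∀ t : ℝ, ((N₀:ℝ)+1) ≤ |t| → |u t - w t| < ε := by
    intro ε hε
    obtain ⟨n, hn⟩ := exists_pow_lt_of_lt_one (show (0:ℝ) < ε/16 by positivity)
      (by norm_num : (1/2:ℝ) < 1)
    refine ⟨n, fun t ht => ?_⟩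
    have h0 : (1:ℝ) ≤ |t| := le_trans (by
      have : (0:ℝ) ≤ (n:ℝ) := Nat.cast_nonneg n
      linarith) ht
    have hfl : 1 ≤ ⌊|t|⌋₊ := Nat.le_floor (by exact_mod_cast h0)
    set N : ℕ := ⌊|t|⌋₊ - 1 with hNdef
    have hN1 : N + 1 = ⌊|t|⌋₊ := by omega
    have hup : ((N:ℝ)+1) ≤ |t| := by
      have := Nat.floor_le (abs_nonneg t)
      have h2 : ((N+1 : ℕ) : ℝ) = (⌊|t|⌋₊ : ℝ) := by exact_mod_cast hN1
      push_cast at h2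
      linarith
    have hdown : |t| ≤ (N:ℝ)+2 := by
      have := (Nat.lt_floor_add_one |t|).le
      have h2 : ((N+1 : ℕ) : ℝ) = (⌊|t|⌋₊ : ℝ) := by exact_mod_cast hN1
      push_cast at h2
      linarith
    have hNn : n ≤ N + 1 := by
      have h3 : (n:ℝ) < (N:ℝ) + 2 := by linarith
      have h4 : n < N + 2 := by exact_mod_cast h3
      omega
    calc |u t - w t| ≤ 16 * (1/2:ℝ)^(N+1) := hkey N t hup hdown
    _ ≤ 16 * (1/2:ℝ)^n := by
        have := pow_le_pow_of_le_one (by norm_num : (0:ℝ) ≤ 1/2) (by norm_num) hNn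
        linarith
    _ < ε := by linarith
  have hΔtop : Tendsto (fun t => u t - w t) atTop (nhds 0) := by
    rw [Metric.tendsto_nhds]
    intro ε hε
    obtain ⟨N₀, hN₀⟩ := hdelta ε hε
    filter_upwards [eventually_ge_atTop ((N₀:ℝ)+1)] with t ht
    rw [Real.dist_eq, sub_zero]
    exact hN₀ t (le_trans ht (le_abs_self t))
  have hΔbot : Tendsto (fun t => u t - w t) atBot (nhds 0) := by
    rw [Metric.tendsto_nhds]
    intro ε hε
    obtain ⟨N₀, hN₀⟩ := hdelta ε hε
    filter_upwards [eventually_le_atBot (-((N₀:ℝ)+1))] with t ht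
    rw [Real.dist_eq, sub_zero]
    exact hN₀ t (le_trans (by linarith [neg_le_abs t]) (le_refl |t|))
  -- the ratio
  have hφu : ∀ t, φ t = Real.exp (u t) := fun t => (Real.exp_log (hφ t)).symm
  have hratio : ∀ t, φ t / ψ t = Real.exp (u t - w t) := fun t => by
    rw [hψdef, Real.exp_sub, ← hφu]
  have hexp0 : Tendsto Real.exp (nhds 0) (nhds 1) := by
    have hc := Real.continuous_exp.tendsto 0
    rwa [Real.exp_zero] at hc
  have htop : Tendsto (fun t => φ t / ψ t) atTop (nhds 1) := by
    rw [show (fun t => φ t / ψ t) = fun t => Real.exp (u t - w t) from funext hratio]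
    exact hexp0.comp hΔtop
  have hbot : Tendsto (fun t => φ t / ψ t) atBot (nhds 1) := by
    rw [show (fun t => φ t / ψ t) = fun t => Real.exp (u t - w t) from funext hratio]
    exact hexp0.comp hΔbot
  -- smoothness (analyticity)
  have hVan : AnalyticOnNhd ℂ V Set.univ := Complex.analyticOnNhd_univ_iff_differentiable.mpr hVdiff
  have h1an : AnalyticOnNhd ℝ (fun t : ℝ => V (t:ℂ)) Set.univ := by
    have hcoe : AnalyticOnNhd ℝ (fun t : ℝ => (t:ℂ)) Set.univ :=
      Complex.ofRealCLM.analyticOnNhd (Set.univ : Set ℝ)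
    exact (hVan.restrictScalars).comp hcoe (Set.mapsTo_univ _ _)
  have h2an : AnalyticOnNhd ℝ w Set.univ := by
    have hre := Complex.reCLM.analyticOnNhd (Set.univ : Set ℂ)
    have hcomp := hre.comp h1an (Set.mapsTo_univ _ _)
    have hw : w = (⇑Complex.reCLM ∘ fun t : ℝ => V (t:ℂ)) := funext fun t => by
      rw [hwdef]; rfl
    rw [hw]
    exact hcomp
  have h3an : AnalyticOnNhd ℝ ψ Set.univ := by
    have hcomp := analyticOnNhd_rexp.comp h2an (Set.mapsTo_univ _ _)
    have hψeq : ψ = (Real.exp ∘ w) := funext fun t => by rw [hψdef]; rfl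
    rw [hψeq]
    exact hcomp
  have hψcd : ContDiff ℝ (⊤ : ℕ∞) ψ := h3an.contDiff
  have hψpos : ∀ t, 0 < ψ t := fun t => by rw [hψdef]; exact Real.exp_pos _
  have hψc : Continuous ψ := hψcd.continuous
  -- the EReal extension of the ratio
  obtain ⟨h, hhbot, hhtop, hhcoe⟩ : ∃ h : EReal → ℝ, h ⊥ = 1 ∧ h ⊤ = 1 ∧
      ∀ t : ℝ, h (t : EReal) = φ t / ψ t :=
    ⟨fun x => if x = ⊥ then 1 else if x = ⊤ then 1 else φ x.toReal / ψ x.toReal,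
      by simp, by simp, fun t => by simp [EReal.coe_ne_bot, EReal.coe_ne_top]⟩
  have hcont : Continuous h := by
    rw [continuous_iff_continuousAt]
    intro x
    induction x using EReal.rec with
    | bot =>
      rw [ContinuousAt, hhbot, Metric.tendsto_nhds]
      intro ε hε
      obtain ⟨a, ha⟩ := (eventually_atBot).mp ((Metric.tendsto_nhds.mp hbot) ε hε)
      refine (EReal.nhds_bot_basis.eventually_iff).mpr ⟨a, trivial, fun x hx => ?_⟩
      induction x using EReal.rec with
      | bot => simpa [hhbot] using hε
      | coe t =>
        rw [hhcoe]
        exact ha t (le_of_lt (EReal.coe_lt_coe_iff.mp (Set.mem_Iio.mp hx)))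
      | top => exact absurd hx (by simp)
    | coe a =>
      have hca : Tendsto (fun t : ℝ => φ t / ψ t) (nhds a) (nhds (φ a / ψ a)) :=
        ((hφc.div hψc fun t => (hψpos t).ne').tendsto a)
      rw [ContinuousAt, EReal.nhds_coe, tendsto_map'_iff]
      have hcomp : (h ∘ (fun t : ℝ => (t : EReal))) = fun t => φ t / ψ t := funext hhcoe
      show Tendsto (h ∘ (fun t : ℝ => (t : EReal))) (nhds a) (nhds (h (a : EReal)))
      rw [hcomp, hhcoe a]
      exact hca
    | top =>
      rw [ContinuousAt, hhtop, Metric.tendsto_nhds]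
      intro ε hε
      obtain ⟨a, ha⟩ := (eventually_atTop).mp ((Metric.tendsto_nhds.mp htop) ε hε)
      refine (EReal.nhds_top_basis.eventually_iff).mpr ⟨a, trivial, fun x hx => ?_⟩
      induction x using EReal.rec with
      | bot => exact absurd hx (by simp)
      | coe t =>
        rw [hhcoe]
        exact ha t (le_of_lt (EReal.coe_lt_coe_iff.mp (Set.mem_Ioi.mp hx)))
      | top => simpa [hhtop] using hε
  have hpos : ∀ x, 0 < h x := by
    intro x
    induction x using EReal.rec with
    | bot => rw [hhbot]; norm_num
    | coe t => rw [hhcoe]; exact div_pos (hφ t) (hψpos t)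
    | top => rw [hhtop]; norm_num
  have key : ∀ (p q : ℝ → ℝ), (∀ t, q t ≠ 0) → ∀ H : C(EReal, ℝ),
      (∀ t : ℝ, H (t : EReal) = p t / q t) →
      {f : ℝ → ℝ | ∃ ft : C(EReal, ℝ), ∀ t : ℝ, f t = p t * ft (t : EReal)} ⊆
      {f : ℝ → ℝ | ∃ ft : C(EReal, ℝ), ∀ t : ℝ, f t = q t * ft (t : EReal)} := by
    rintro p q hq H hH f ⟨ft, hft⟩
    refine ⟨ft * H, fun t => ?_⟩
    rw [ContinuousMap.mul_apply, hft t, hH t]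
    have hcalc : q t * (ft (t : EReal) * (p t / q t)) = p t * ft (t : EReal) := by
      calc q t * (ft (t : EReal) * (p t / q t))
          = ft (t : EReal) * (p t / q t * q t) := by ring
        _ = ft (t : EReal) * p t := by rw [div_mul_cancel₀ _ (hq t)]
        _ = p t * ft (t : EReal) := by ring
    exact hcalc.symm
  refine ⟨ψ, hψcd, hψpos, htop, hbot, Set.Subset.antisymm
    (key φ ψ (fun t => (hψpos t).ne') ⟨h, hcont⟩ hhcoe)
    (key ψ φ (fun t => (hφ t).ne') ⟨fun x => (h x)⁻¹, hcont.inv₀ fun x => (hpos x).ne'⟩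
      (fun t => ?_))⟩
  show (h (t : EReal))⁻¹ = ψ t / φ t
  rw [hhcoe t, inv_div]
end

section
/- Let u : [0, ∞) → [0, ∞) be differentiable with u(t) → ∞ as t → ∞ and u'(t) = √(2gR²/(u(t)+R)) for all t ≥ 0, where g, R > 0 are constants. Then lim_{t→∞} u(t)/t^{2/3} = (3/2)^{2/3}·(2gR²)^{1/3}. -/
open Filter Real

/-- Projectile at exactly escape velocity: if `u ≥ 0` is differentiable on `[0,∞)`,
`u(t) → ∞`, and `u'(t) = √(2gR²/(u(t)+R))` for all `t ≥ 0`, then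
`u(t)/t^{2/3} → (3/2)^{2/3}·(2gR²)^{1/3}` as `t → ∞`. -/
theorem stmt_14 (g R : ℝ) (hg : 0 < g) (hR : 0 < R) (u : ℝ → ℝ)
    (hnonneg : ∀ t ≥ 0, 0 ≤ u t)
    (hdiff : ∀ t ≥ 0, DifferentiableAt ℝ u t)
    (hinf : Tendsto u atTop atTop)
    (hode : ∀ t ≥ 0, deriv u t = Real.sqrt (2 * g * R ^ 2 / (u t + R))) :
    Tendsto (fun t => u t / t ^ ((2 : ℝ) / 3)) atTop
      (nhds ((3 / 2 : ℝ) ^ ((2 : ℝ) / 3) * (2 * g * R ^ 2) ^ ((1 : ℝ) / 3))) := by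
  set X : ℝ := 2 * g * R ^ 2 with hX
  have hXpos : 0 < X := by positivity
  set c : ℝ := Real.sqrt X with hc
  have hcpos : 0 < c := Real.sqrt_pos.mpr hXpos
  set f : ℝ → ℝ := fun s => (u s + R) * Real.sqrt (u s + R) - 3 / 2 * c * s with hf
  -- f has derivative 0 at every s ≥ 0
  have hderiv : ∀ s : ℝ, 0 ≤ s → HasDerivAt f 0 s := by
    intro s hs
    have hw : 0 < u s + R := by linarith [hnonneg s hs]
    have hsq : 0 < Real.sqrt (u s + R) := Real.sqrt_pos.mpr hw
    have hu' : HasDerivAt u (c / Real.sqrt (u s + R)) s := by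
      have := (hdiff s hs).hasDerivAt
      rwa [hode s hs, Real.sqrt_div (by positivity : (0:ℝ) ≤ X), ← hc] at this
    have h1 : HasDerivAt (fun x => u x + R) (c / Real.sqrt (u s + R)) s := hu'.add_const R
    have h2 : HasDerivAt (fun x => Real.sqrt (u x + R))
        (1 / (2 * Real.sqrt (u s + R)) * (c / Real.sqrt (u s + R))) s :=
      (Real.hasDerivAt_sqrt hw.ne').comp s h1
    have h3 := (h1.mul h2).sub ((hasDerivAt_id s).const_mul (3 / 2 * c))
    have key : c / Real.sqrt (u s + R) * Real.sqrt (u s + R) +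
        (u s + R) * (1 / (2 * Real.sqrt (u s + R)) * (c / Real.sqrt (u s + R))) -
        3 / 2 * c * 1 = 0 := by
      have hss : Real.sqrt (u s + R) * Real.sqrt (u s + R) = u s + R :=
        Real.mul_self_sqrt hw.le
      field_simp
      nlinarith [hsq, hss]
    have h0 : HasDerivAt f (c / Real.sqrt (u s + R) * Real.sqrt (u s + R) +
        (u s + R) * (1 / (2 * Real.sqrt (u s + R)) * (c / Real.sqrt (u s + R))) -
        3 / 2 * c * 1) s := h3
    rwa [key] at h0
  -- hence f is constant on [0, ∞)
  have hconst : ∀ t : ℝ, 0 ≤ t → f t = f 0 := by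
    intro t ht
    have hcont : ContinuousOn f (Set.Icc 0 t) := fun x hx =>
      ((hderiv x hx.1).continuousAt).continuousWithinAt
    have := constant_of_has_deriv_right_zero hcont (fun x hx =>
      (hderiv x hx.1).hasDerivWithinAt)
    exact this t (Set.mem_Icc.mpr ⟨le_refl 0 |>.trans ht, le_refl t⟩) |>.trans (by rfl) |> id
  set K : ℝ := (u 0 + R) * Real.sqrt (u 0 + R) with hK
  have hKpos : 0 < K := by
    have h0 : 0 < u 0 + R := by linarith [hnonneg 0 le_rfl]
    exact mul_pos h0 (Real.sqrt_pos.mpr h0)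
  -- explicit formula : (u t + R)^{3/2} = (3/2) c t + K
  have hform : ∀ t : ℝ, 0 ≤ t → (u t + R) ^ ((3:ℝ)/2) = 3 / 2 * c * t + K := by
    intro t ht
    have hw : 0 ≤ u t + R := by linarith [hnonneg t ht]
    have := hconst t ht
    have hft : (u t + R) * Real.sqrt (u t + R) = 3 / 2 * c * t + K := by
      simp only [hf] at this
      have h00 : 3 / 2 * c * (0:ℝ) = 0 := by ring
      rw [h00, sub_zero] at this
      linarith [this]
    rw [← hft, show (3:ℝ)/2 = 1 + 1/2 by norm_num, Real.rpow_add' hw (by norm_num),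
      Real.rpow_one, Real.sqrt_eq_rpow]
  -- so u t = ((3/2) c t + K)^{2/3} - R
  have hsol : ∀ t : ℝ, 0 ≤ t → u t = (3 / 2 * c * t + K) ^ ((2:ℝ)/3) - R := by
    intro t ht
    have hw : 0 ≤ u t + R := by linarith [hnonneg t ht]
    have := hform t ht
    have : ((u t + R) ^ ((3:ℝ)/2)) ^ ((2:ℝ)/3) = (3 / 2 * c * t + K) ^ ((2:ℝ)/3) := by
      rw [this]
    rwa [← Real.rpow_mul hw, show (3:ℝ)/2 * (2/3) = 1 by norm_num, Real.rpow_one,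
      eq_sub_iff_add_eq.symm] at this
  -- limit value
  have hAval : ((3:ℝ)/2 * c) ^ ((2:ℝ)/3) =
      (3 / 2 : ℝ) ^ ((2 : ℝ) / 3) * X ^ ((1 : ℝ) / 3) := by
    rw [Real.mul_rpow (by norm_num) hcpos.le, hc, Real.sqrt_eq_rpow,
      ← Real.rpow_mul hXpos.le]
    norm_num
  rw [← hAval]
  -- eventual equality with nice expression
  have heq : ∀ᶠ t in atTop, ((3 / 2 * c + K / t) ^ ((2:ℝ)/3) - R / t ^ ((2:ℝ)/3))
      = u t / t ^ ((2 : ℝ) / 3) := by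
    filter_upwards [eventually_gt_atTop 0] with t ht
    have hnum : 0 ≤ 3 / 2 * c * t + K := by positivity
    rw [hsol t ht.le, sub_div, ← Real.div_rpow hnum ht.le,
      show (3 / 2 * c * t + K) / t = 3 / 2 * c + K / t by field_simp]
  refine Tendsto.congr' heq ?_
  have hK0 : Tendsto (fun t : ℝ => K / t) atTop (nhds 0) := by
    simpa using Tendsto.div_atTop (tendsto_const_nhds (x := K)) tendsto_id
  have h1 : Tendsto (fun t : ℝ => 3 / 2 * c + K / t) atTop (nhds (3 / 2 * c)) := by
    simpa using (tendsto_const_nhds (x := 3 / 2 * c)).add hK0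
  have h2 : Tendsto (fun t : ℝ => (3 / 2 * c + K / t) ^ ((2:ℝ)/3)) atTop
      (nhds ((3 / 2 * c) ^ ((2:ℝ)/3))) :=
    h1.rpow_const (Or.inl (by positivity))
  have h3 : Tendsto (fun t : ℝ => R / t ^ ((2:ℝ)/3)) atTop (nhds 0) :=
    tendsto_const_nhds.div_atTop (tendsto_rpow_atTop (by norm_num))
  simpa using h2.sub h3
end
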